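/- Let δ ∈ (0,2), σ > 0 and M > 0. There exists a constant C = C(M, σ, δ) > 0 such that for every β > 0 and every measurable L : ℝ → ℝ satisfying |L(θ)| ≤ β·exp(|θ|^{2−δ}) for all θ ∈ ℝ, the Gaussian smoothed loss L_σ is Lipschitz continuous on the interval [−M, M] with Lipschitz constant β·C, i.e. |L_σ(θ₁) − L_σ(θ₂)| ≤ β·C·|θ₁ − θ₂| for all θ₁, θ₂ ∈ [−M, M]. -/

import Mathlib

open MeasureTheory ProbabilityTheory Real

/-- The Gaussian smoothing `L_σ(θ) = E_{ε ~ N(0,σ²)}[L (θ + ε)]` of a loss `L`. -/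
noncomputable def gaussianSmoothing (L : ℝ → ℝ) (σ θ : ℝ) : ℝ :=
  ∫ ε, L (θ + ε) ∂(gaussianReal 0 ⟨σ ^ 2, sq_nonneg σ⟩)

lemma gs_subquad (b δ : ℝ) (hb : 0 < b) (hδ0 : 0 < δ) (hδ2 : δ < 2) :
    ∃ K : ℝ, 0 ≤ K ∧ ∀ t : ℝ, 0 ≤ t → t ^ (2 - δ) ≤ b * t ^ 2 + K := by
  set T : ℝ := (1 / b) ^ (1 / δ) with hTdef
  have hT0 : 0 < T := Real.rpow_pos_of_pos (by positivity) _
  refine ⟨T ^ (2 - δ), Real.rpow_nonneg hT0.le _, fun t ht => ?_⟩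
  rcases le_total t T with h | h
  · have h1 : t ^ (2 - δ) ≤ T ^ (2 - δ) := Real.rpow_le_rpow ht h (by linarith)
    nlinarith [sq_nonneg t]
  · have ht0 : 0 < t := lt_of_lt_of_le hT0 h
    have hTδ : T ^ δ = 1 / b := by
      rw [hTdef, ← Real.rpow_mul (by positivity), one_div δ, inv_mul_cancel₀ hδ0.ne',
        Real.rpow_one]
    have h2 : (1:ℝ)/b ≤ t ^ δ := by
      rw [← hTδ]; exact Real.rpow_le_rpow hT0.le h hδ0.le
    have h3 : t ^ (-δ) ≤ b := by
      rw [Real.rpow_neg ht0.le]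
      rw [show b = ((1:ℝ)/b)⁻¹ by field_simp]
      exact inv_anti₀ (by positivity) h2
    have h4 : t ^ (2 - δ) = t ^ 2 * t ^ (-δ) := by
      rw [show (2 - δ) = 2 + (-δ) by ring, Real.rpow_add ht0, Real.rpow_two]
    rw [h4]
    have h5 : t ^ 2 * t ^ (-δ) ≤ t ^ 2 * b :=
      mul_le_mul_of_nonneg_left h3 (sq_nonneg t)
    have : 0 ≤ T ^ (2 - δ) := Real.rpow_nonneg hT0.le _
    nlinarith

lemma gs_int_aux (M b : ℝ) (hb : 0 < b) :
    Integrable (fun x : ℝ => (|x| + M) * Real.exp (-b * x ^ 2)) := by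
  have h1 : Integrable (fun x : ℝ => x ^ (1:ℝ) * Real.exp (-b * x ^ 2)) :=
    integrable_rpow_mul_exp_neg_mul_sq hb (by norm_num)
  have h2 := h1.abs
  have h3 : Integrable (fun x : ℝ => |x| * Real.exp (-b * x ^ 2)) := by
    refine h2.congr (Filter.Eventually.of_forall fun x => ?_)
    simp only [Real.rpow_one]
    rw [abs_mul, abs_of_pos (Real.exp_pos _)]
  have h4 := h3.add ((integrable_exp_neg_mul_sq hb).const_mul M)
  refine h4.congr (Filter.Eventually.of_forall fun x => ?_)
  simp [add_mul, mul_comm]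

lemma gs_deriv (σ A y : ℝ) (hσ : 0 < σ) :
    HasDerivAt (fun u : ℝ => A * Real.exp (-u^2/(2*σ^2)))
      (A * Real.exp (-y^2/(2*σ^2)) * (-y/σ^2)) y := by
  have h0 : HasDerivAt (fun u : ℝ => -u^2/(2*σ^2)) (-y/σ^2) y := by
    have := ((hasDerivAt_pow 2 y).neg).div_const (2*σ^2)
    refine this.congr_deriv ?_
    field_simp
    ring
  have := (h0.exp).const_mul A
  refine this.congr_deriv ?_
  ring

lemma gs_mvt_bound (σ M A θ₁ θ₂ x : ℝ) (hσ : 0 < σ) (hA : 0 < A)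
    (h₁ : |θ₁| ≤ M) (h₂ : |θ₂| ≤ M) :
    |A * Real.exp (-(x-θ₁)^2/(2*σ^2)) - A * Real.exp (-(x-θ₂)^2/(2*σ^2))|
      ≤ ((|x| + M)/σ^2 * (A * Real.exp (-(max (|x| - M) 0)^2/(2*σ^2)))) * |θ₁ - θ₂| := by
  set D := (|x| + M)/σ^2 * (A * Real.exp (-(max (|x| - M) 0)^2/(2*σ^2))) with hD
  have key := Convex.norm_image_sub_le_of_norm_hasDerivWithin_le
    (f := fun u : ℝ => A * Real.exp (-u^2/(2*σ^2)))
    (f' := fun y => A * Real.exp (-y^2/(2*σ^2)) * (-y/σ^2))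
    (s := Set.Icc (x - M) (x + M)) (C := D) (x := x - θ₂) (y := x - θ₁)
    (fun y _ => (gs_deriv σ A y hσ).hasDerivWithinAt)
    (fun y hy => ?_) (convex_Icc _ _) ?_ ?_
  · calc |A * Real.exp (-(x-θ₁)^2/(2*σ^2)) - A * Real.exp (-(x-θ₂)^2/(2*σ^2))|
        = ‖(fun u : ℝ => A * Real.exp (-u^2/(2*σ^2))) (x - θ₁)
            - (fun u : ℝ => A * Real.exp (-u^2/(2*σ^2))) (x - θ₂)‖ := rfl
      _ ≤ D * ‖(x - θ₁) - (x - θ₂)‖ := key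
      _ = D * |θ₁ - θ₂| := by
            rw [Real.norm_eq_abs, show (x - θ₁) - (x - θ₂) = -(θ₁ - θ₂) by ring, abs_neg]
  · obtain ⟨hy1, hy2⟩ := hy
    have hyabs : |y| ≤ |x| + M := by
      rcases abs_cases x with ⟨hx, _⟩ | ⟨hx, _⟩ <;> rcases abs_cases y with ⟨hy', _⟩ | ⟨hy', _⟩ <;>
        linarith
    have hylow : max (|x| - M) 0 ≤ |y| := by
      refine max_le ?_ (abs_nonneg y)
      have : |x| - |y| ≤ |x - y| := abs_sub_abs_le_abs_sub x y
      have hxy : |x - y| ≤ M := by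
        rw [abs_le]; constructor <;> linarith
      linarith
    have hsq : (max (|x| - M) 0)^2 ≤ y^2 := by
      rw [← sq_abs y]
      exact pow_le_pow_left₀ (le_max_right _ _) hylow 2
    have hexp : Real.exp (-y^2/(2*σ^2)) ≤ Real.exp (-(max (|x| - M) 0)^2/(2*σ^2)) := by
      apply Real.exp_le_exp.2
      have h2σ : (0:ℝ) < 2*σ^2 := by positivity
      rw [div_le_div_iff₀ h2σ h2σ]
      nlinarith
    have hE1 : (0:ℝ) < Real.exp (-y^2/(2*σ^2)) := Real.exp_pos _
    have hE2 : (0:ℝ) < Real.exp (-(max (|x| - M) 0)^2/(2*σ^2)) := Real.exp_pos _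
    rw [Real.norm_eq_abs, abs_mul, abs_mul, abs_of_pos hA, abs_of_pos hE1, hD]
    have habs : |(-y/σ^2)| = |y|/σ^2 := by
      rw [abs_div, abs_neg, abs_of_pos (by positivity : (0:ℝ) < σ^2)]
    rw [habs]
    have hσ2 : (0:ℝ) < σ^2 := by positivity
    have h1 : A * Real.exp (-y^2/(2*σ^2)) * (|y|/σ^2)
        ≤ A * Real.exp (-(max (|x| - M) 0)^2/(2*σ^2)) * ((|x| + M)/σ^2) := by
      have := abs_nonneg y
      apply mul_le_mul
      · exact mul_le_mul_of_nonneg_left hexp hA.le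
      · gcongr
      · positivity
      · positivity
    linarith [h1]
  · exact ⟨by linarith [abs_le.1 h₂ |>.2], by linarith [abs_le.1 h₂ |>.1]⟩
  · exact ⟨by linarith [abs_le.1 h₁ |>.2], by linarith [abs_le.1 h₁ |>.1]⟩

lemma gs_repr (L : ℝ → ℝ) (σ θ : ℝ) (hσ : 0 < σ) :
    gaussianSmoothing L σ θ
      = ∫ x, L x * gaussianPDFReal 0 ⟨σ^2, sq_nonneg σ⟩ (x - θ) := by
  have hv : (⟨σ^2, sq_nonneg σ⟩ : NNReal) ≠ 0 := by
    simp [← NNReal.coe_ne_zero]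
    positivity
  rw [gaussianSmoothing, gaussianReal_of_var_ne_zero _ hv]
  have hpdf : gaussianPDF 0 (⟨σ^2, sq_nonneg σ⟩ : NNReal)
      = fun x => (((gaussianPDFReal 0 ⟨σ^2, sq_nonneg σ⟩ x).toNNReal : NNReal) : ENNReal) := rfl
  rw [hpdf]
  rw [integral_withDensity_eq_integral_smul
      (f := fun x => (gaussianPDFReal 0 ⟨σ^2, sq_nonneg σ⟩ x).toNNReal)
      (measurable_real_toNNReal.comp (measurable_gaussianPDFReal _ _)) _]
  have key : ∀ ε : ℝ, ((gaussianPDFReal 0 ⟨σ^2, sq_nonneg σ⟩ ε).toNNReal : ℝ) • L (θ + ε)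
      = (fun x => L x * gaussianPDFReal 0 ⟨σ^2, sq_nonneg σ⟩ (x - θ)) (θ + ε) := by
    intro ε
    simp [Real.coe_toNNReal _ (gaussianPDFReal_nonneg _ _ _), smul_eq_mul, mul_comm]
    exact Or.inl (gaussianPDFReal_nonneg _ _ _)
  simp_rw [NNReal.smul_def, key]
  exact integral_add_left_eq_self (μ := (volume : Measure ℝ))
    (fun x => L x * gaussianPDFReal 0 ⟨σ^2, sq_nonneg σ⟩ (x - θ)) θ

theorem gaussian_smoothing_lipschitz_on_compact
    (δ σ M : ℝ) (hδ : δ ∈ Set.Ioo (0 : ℝ) 2) (hσ : 0 < σ) (hM : 0 < M) :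
    ∃ C : ℝ, 0 < C ∧
      ∀ β : ℝ, 0 < β → ∀ L : ℝ → ℝ, Measurable L →
        (∀ θ : ℝ, |L θ| ≤ β * Real.exp (|θ| ^ (2 - δ))) →
        ∀ θ₁ ∈ Set.Icc (-M) M, ∀ θ₂ ∈ Set.Icc (-M) M,
          |gaussianSmoothing L σ θ₁ - gaussianSmoothing L σ θ₂| ≤ β * C * |θ₁ - θ₂| := by
  obtain ⟨hδ0, hδ2⟩ := hδ
  set A : ℝ := (Real.sqrt (2*π*σ^2))⁻¹ with hAdef
  have hA : 0 < A := by
    rw [hAdef]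
    have : (0:ℝ) < Real.sqrt (2*π*σ^2) := Real.sqrt_pos.2 (by positivity)
    positivity
  have hσ2 : (0:ℝ) < σ^2 := by positivity
  have hgauss : ∀ x : ℝ, gaussianPDFReal 0 ⟨σ^2, sq_nonneg σ⟩ x
      = A * Real.exp (-x^2/(2*σ^2)) := by
    intro x
    simp [gaussianPDFReal, hAdef]
    rfl
  -- the integrable majorant
  set F : ℝ → ℝ := fun x =>
    Real.exp (|x| ^ (2-δ)) * ((|x| + M)/σ^2 * (A * Real.exp (-(max (|x| - M) 0)^2/(2*σ^2))))
    with hFdef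
  have hF_nonneg : ∀ x, 0 ≤ F x := fun x => by
    rw [hFdef]
    have h1 : (0:ℝ) ≤ |x| + M := by positivity
    positivity
  have hF_meas : Measurable F := by
    rw [hFdef]; fun_prop
  -- integrability of F
  set b : ℝ := 1/(8*σ^2) with hbdef
  have hb : 0 < b := by rw [hbdef]; positivity
  obtain ⟨K, hK0, hK⟩ := gs_subquad b δ hb hδ0 hδ2
  have hm_lb : ∀ x : ℝ, x^2/2 - M^2 ≤ (max (|x| - M) 0)^2 := by
    intro x
    rcases le_total (|x|) M with h | h
    · rw [max_eq_right (by linarith)]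
      nlinarith [sq_abs x, abs_nonneg x]
    · rw [max_eq_left (by linarith)]
      nlinarith [sq_abs x, sq_nonneg (|x| - 2*M)]
  have hF_bound : ∀ x : ℝ, F x ≤
      (A/σ^2 * Real.exp (K + M^2/(2*σ^2))) * ((|x| + M) * Real.exp (-b * x^2)) := by
    intro x
    have hexp_comb : F x = (|x| + M) * (A/σ^2)
        * Real.exp (|x| ^ (2-δ) + (-(max (|x| - M) 0)^2/(2*σ^2))) := by
      rw [hFdef, Real.exp_add]; ring
    rw [hexp_comb]
    have hexpo : |x| ^ (2-δ) + (-(max (|x| - M) 0)^2/(2*σ^2))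
        ≤ (K + M^2/(2*σ^2)) + (-b * x^2) := by
      have h1 : |x| ^ (2-δ) ≤ b * x^2 + K := by
        have := hK (|x|) (abs_nonneg x)
        rwa [sq_abs] at this
      have h2 : -(max (|x| - M) 0)^2/(2*σ^2) ≤ -(x^2/2 - M^2)/(2*σ^2) := by
        have h2σ : (0:ℝ) < 2*σ^2 := by positivity
        rw [div_le_div_iff₀ h2σ h2σ]
        nlinarith [hm_lb x]
      have h3 : -(x^2/2 - M^2)/(2*σ^2) = -x^2/(4*σ^2) + M^2/(2*σ^2) := by
        field_simp; ring
      have h4 : b * x^2 + (-x^2/(4*σ^2)) = -b * x^2 := by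
        rw [hbdef]; field_simp; ring
      nlinarith [h1, h2, h3, h4]
    calc (|x| + M) * (A/σ^2) * Real.exp (|x| ^ (2-δ) + (-(max (|x| - M) 0)^2/(2*σ^2)))
        ≤ (|x| + M) * (A/σ^2) * Real.exp ((K + M^2/(2*σ^2)) + (-b * x^2)) := by
          apply mul_le_mul_of_nonneg_left (Real.exp_le_exp.2 hexpo) (by positivity)
      _ = (A/σ^2 * Real.exp (K + M^2/(2*σ^2))) * ((|x| + M) * Real.exp (-b * x^2)) := by
          rw [Real.exp_add]; ring
  have hF_int : Integrable F := by
    refine Integrable.mono' (((gs_int_aux M b hb).const_mul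
      (A/σ^2 * Real.exp (K + M^2/(2*σ^2))))) hF_meas.aestronglyMeasurable
      (Filter.Eventually.of_forall fun x => ?_)
    rw [Real.norm_eq_abs, abs_of_nonneg (hF_nonneg x)]
    exact hF_bound x
  have hFI0 : 0 ≤ ∫ x, F x := integral_nonneg hF_nonneg
  refine ⟨(∫ x, F x) + 1, by linarith, fun β hβ L hL hgrow θ₁ hθ₁ θ₂ hθ₂ => ?_⟩
  have hθ₁' : |θ₁| ≤ M := abs_le.2 ⟨hθ₁.1, hθ₁.2⟩
  have hθ₂' : |θ₂| ≤ M := abs_le.2 ⟨hθ₂.1, hθ₂.2⟩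
  -- integrability of the integrands
  have hint : ∀ θ : ℝ, |θ| ≤ M →
      Integrable (fun x => L x * gaussianPDFReal 0 ⟨σ^2, sq_nonneg σ⟩ (x - θ)) := by
    intro θ hθ
    refine Integrable.mono' (hF_int.const_mul (β*σ^2/M))
      ((hL.mul ((measurable_gaussianPDFReal _ _).comp (measurable_id.sub_const θ))).aestronglyMeasurable)
      (Filter.Eventually.of_forall fun x => ?_)
    rw [Real.norm_eq_abs, abs_mul, hgauss]
    have hsub : (max (|x| - M) 0)^2 ≤ (x - θ)^2 := by
      have h1 : max (|x| - M) 0 ≤ |x - θ| := by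
        refine max_le ?_ (abs_nonneg _)
        have := abs_sub_abs_le_abs_sub x θ
        linarith [abs_le.1 hθ |>.2, abs_le.1 hθ |>.1]
      calc (max (|x| - M) 0)^2 ≤ |x - θ|^2 := pow_le_pow_left₀ (le_max_right _ _) h1 2
        _ = (x - θ)^2 := sq_abs _
    have hφle : A * Real.exp (-(x-θ)^2/(2*σ^2))
        ≤ A * Real.exp (-(max (|x| - M) 0)^2/(2*σ^2)) := by
      apply mul_le_mul_of_nonneg_left ?_ hA.le
      apply Real.exp_le_exp.2
      have h2σ : (0:ℝ) < 2*σ^2 := by positivity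
      rw [div_le_div_iff₀ h2σ h2σ]
      nlinarith
    have habsφ : |A * Real.exp (-(x-θ)^2/(2*σ^2))| = A * Real.exp (-(x-θ)^2/(2*σ^2)) := by
      exact abs_of_nonneg (by positivity)
    rw [habsφ]
    have hLx := hgrow x
    have hE : (0:ℝ) < Real.exp (|x| ^ (2-δ)) := Real.exp_pos _
    -- |L x| * φ(x-θ) ≤ β exp(|x|^{2-δ}) * (A * exp(-m²/(2σ²))) ≤ (βσ²/M) * F x
    calc |L x| * (A * Real.exp (-(x-θ)^2/(2*σ^2)))
        ≤ (β * Real.exp (|x| ^ (2-δ))) * (A * Real.exp (-(max (|x| - M) 0)^2/(2*σ^2))) := by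
          apply mul_le_mul hLx hφle (by positivity) (by positivity)
      _ ≤ β*σ^2/M * F x := by
          rw [hFdef]
          have hMle : M ≤ |x| + M := by linarith [abs_nonneg x]
          have hrw : β*σ^2/M * (Real.exp (|x| ^ (2-δ))
              * ((|x| + M)/σ^2 * (A * Real.exp (-(max (|x| - M) 0)^2/(2*σ^2)))))
              = (β * Real.exp (|x| ^ (2-δ)))
                * (A * Real.exp (-(max (|x| - M) 0)^2/(2*σ^2))) * ((|x| + M)/M) := by
            field_simp
          rw [hrw]
          have h1M : (1:ℝ) ≤ (|x| + M)/M := by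
            rw [le_div_iff₀ hM]; linarith
          exact le_mul_of_one_le_right (by positivity) h1M
  -- main estimate
  rw [gs_repr L σ θ₁ hσ, gs_repr L σ θ₂ hσ, ← integral_sub (hint θ₁ hθ₁') (hint θ₂ hθ₂')]
  have hbound : ∀ x : ℝ, ‖L x * gaussianPDFReal 0 ⟨σ^2, sq_nonneg σ⟩ (x - θ₁)
      - L x * gaussianPDFReal 0 ⟨σ^2, sq_nonneg σ⟩ (x - θ₂)‖
      ≤ (β * |θ₁ - θ₂|) * F x := by
    intro x
    rw [Real.norm_eq_abs, ← mul_sub, abs_mul, hgauss, hgauss]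
    have hmvt := gs_mvt_bound σ M A θ₁ θ₂ x hσ hA hθ₁' hθ₂'
    have hLx := hgrow x
    calc |L x| * |A * Real.exp (-(x-θ₁)^2/(2*σ^2)) - A * Real.exp (-(x-θ₂)^2/(2*σ^2))|
        ≤ (β * Real.exp (|x| ^ (2-δ)))
          * (((|x| + M)/σ^2 * (A * Real.exp (-(max (|x| - M) 0)^2/(2*σ^2)))) * |θ₁ - θ₂|) := by
          apply mul_le_mul hLx hmvt (abs_nonneg _) (by positivity)
      _ = (β * |θ₁ - θ₂|) * F x := by rw [hFdef]; ring
  have hnorm := norm_integral_le_of_norm_le ((hF_int.const_mul (β * |θ₁ - θ₂|)))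
    (Filter.Eventually.of_forall hbound)
  rw [Real.norm_eq_abs] at hnorm
  have hIC : ∫ x, (β * |θ₁ - θ₂|) * F x = (β * |θ₁ - θ₂|) * ∫ x, F x :=
    integral_const_mul _ _
  rw [hIC] at hnorm
  have habs : 0 ≤ |θ₁ - θ₂| := abs_nonneg _
  nlinarith [hnorm, mul_nonneg hβ.le habs]
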